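/- arXiv:1910.13932 — 2 statements merged into one kernel-verified Lean document; each statement's English description precedes it below -/
import Mathlib

section
/- Let 0 < k1 < k2, M2 > 0, σ̄2 > 0 and let ξ ∈ ℂ satisfy Re ξ · Im ξ < 0. If complex numbers c₁, c₂, d₁, d₂ satisfy the four equations c₁·exp(i·μ₁(ξ)·M̃2) + c₂·exp(−i·μ₁(ξ)·M̃2) = 0, d₁·exp(i·μ₂(ξ)·M̃2) + d₂·exp(−i·μ₂(ξ)·M̃2) = 0, c₁ + c₂ = d₁ + d₂, and μ₁(ξ)·(c₁ − c₂) = μ₂(ξ)·(d₂ − d₁), then c₁ = c₂ = d₁ = d₂ = 0. (This expresses that the PML-truncated two-layer waveguide eigenvalue problem has no eigenvalues in the open second or fourth quadrant.) -/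
/-!
On each layer write `w = μ M̃2`. A combination `c₁ e^{iwt} + c₂ e^{-iwt}` vanishing at `t = 1` is
`C sin(w(1 - t))`, and Green's identity for it reads
`i w (c₁ - c₂) · conj (c₁ + c₂) = w² P - Q` with `P = |C|² ∫₀¹ |sin(wt)|² ≥ 0` and `Q ≥ 0`.
The interface conditions make the two left-hand sides cancel, so, with `wⱼ² = (kⱼ² - ξ²) M̃2²`,
`M̃2² (K - ξ² (P₁ + P₂)) = Q₁ + Q₂` for some real `K`. Dividing by `M̃2²` and taking imaginary
parts, `Im ξ² < 0` and `Im M̃2² > 0` force `P₁ + P₂ = 0`, hence `C = 0` on both layers.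
-/

/-- `w` is the principal square root of `z`: `w² = z` and either `Re w > 0`, or
`Re w = 0` and `Im w ≥ 0`. -/
def IsPrincipalSqrt (z w : ℂ) : Prop :=
  w ^ 2 = z ∧ (0 < w.re ∨ (w.re = 0 ∧ 0 ≤ w.im))

open Complex ComplexConjugate

lemma IsPrincipalSqrt.re_pos_and_im_pos {z w : ℂ} (hw : IsPrincipalSqrt z w) (hz : 0 < z.im) :
    0 < w.re ∧ 0 < w.im := by
  obtain ⟨hsq, hre | ⟨hre, -⟩⟩ := hw
  all_goals have him : 2 * w.re * w.im = z.im := by rw [← hsq, sq, mul_im]; ring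
  · exact ⟨hre, by nlinarith⟩
  · rw [hre, mul_zero, zero_mul] at him; linarith

lemma im_mul_pos {a b : ℂ} (ha : 0 < a.re) (ha' : 0 < a.im) (hb : 0 < b.re) (hb' : 0 < b.im) :
    0 < (a * b).im := by
  rw [mul_im]; positivity

lemma cos_mul_conj_sin (z : ℂ) :
    cos z * conj (sin z) = (Real.sin (2 * z.re) - Real.sinh (2 * z.im) * I) / 2 := by
  have hadd : ((2 * z.re : ℝ) : ℂ) = conj z + z := by rw [add_comm, add_conj]
  have hsub : ((2 * z.im : ℝ) : ℂ) * I = -(conj z - z) := by rw [neg_sub, sub_conj]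
  rw [← sin_conj, ofReal_sin, ofReal_sinh, ← sin_mul_I, hsub, hadd, sin_neg, sin_add, sin_sub]
  ring

lemma Real.mul_sinc (x : ℝ) : x * Real.sinc x = Real.sin x := by
  rcases eq_or_ne x 0 with rfl | hx
  · simp
  · rw [Real.sinc_of_ne_zero hx]; field_simp

/-- Green's identity for `u t = sin (α t)` on `[0, 1]`: `p = ∫ |u|²` and `q = ∫ |u'|²`, which
evaluate to the witnesses below. -/
lemma exists_mul_cos_mul_conj_sin_eq {α : ℂ} (hα : 0 < α.im) :
    ∃ p q : ℝ, 0 < p ∧ 0 ≤ q ∧ α * cos α * conj (sin α) = q - α ^ 2 * p := by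
  set a := Real.sinh (2 * α.im) / (2 * α.im) with ha_def
  set b := Real.sinc (2 * α.re)
  have ha : 1 < a := by
    rw [lt_div_iff₀ (by positivity), one_mul]
    exact Real.self_lt_sinh_iff.mpr (by positivity)
  have hb := abs_le.mp (Real.abs_sinc_le_one (2 * α.re))
  refine ⟨(a - b) / 2, normSq α * (a + b) / 2, by linarith,
    div_nonneg (mul_nonneg (normSq_nonneg α) (by linarith)) zero_le_two, ?_⟩
  have hsinh : Real.sinh (2 * α.im) = 2 * α.im * a := by rw [ha_def]; field_simp
  rw [mul_assoc, cos_mul_conj_sin, ← Real.mul_sinc, hsinh]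
  apply Complex.ext <;> simp [normSq_apply, sq] <;> ring

lemma exists_add_eq_mul_sin {c₁ c₂ w : ℂ} (h : c₁ * exp (I * w) + c₂ * exp (-(I * w)) = 0) :
    ∃ C, c₁ + c₂ = C * sin w ∧ I * (c₁ - c₂) = -(C * cos w) := by
  have hE := exp_ne_zero (I * w)
  have hc₂ : c₂ = -c₁ * exp (I * w) ^ 2 := by
    rw [exp_neg] at h; field_simp at h; linear_combination h
  refine ⟨-2 * I * c₁ * exp (I * w), ?_, ?_⟩
  all_goals
    simp only [Complex.sin, Complex.cos, neg_mul, mul_comm w, exp_neg, hc₂]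
    field_simp
  · linear_combination (1 - exp (I * w) ^ 2) * c₁ * I_sq
  · ring

lemma exists_energy_identity {c₁ c₂ w : ℂ} (hw : 0 < w.im)
    (h : c₁ * exp (I * w) + c₂ * exp (-(I * w)) = 0) :
    ∃ P Q : ℝ, 0 ≤ P ∧ 0 ≤ Q ∧ (P = 0 → c₁ = 0 ∧ c₂ = 0) ∧
      I * w * (c₁ - c₂) * conj (c₁ + c₂) = w ^ 2 * P - Q := by
  obtain ⟨C, hsin, hcos⟩ := exists_add_eq_mul_sin h
  obtain ⟨p, q, hp, hq, hpq⟩ := exists_mul_cos_mul_conj_sin_eq hw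
  refine ⟨normSq C * p, normSq C * q, mul_nonneg (normSq_nonneg C) hp.le,
    mul_nonneg (normSq_nonneg C) hq, fun hP => ?_, ?_⟩
  · have hC : C = 0 := normSq_eq_zero.mp ((mul_eq_zero.mp hP).resolve_right hp.ne')
    simp only [hC, zero_mul, neg_zero, mul_eq_zero, I_ne_zero, false_or] at hsin hcos
    exact ⟨by linear_combination (hsin + hcos) / 2, by linear_combination (hsin - hcos) / 2⟩
  · rw [hsin, map_mul]
    push_cast
    rw [← mul_conj]
    linear_combination w * conj C * conj (sin w) * hcos - C * conj C * hpq

lemma eq_zero_of_mul_sub_sq_mul_eq_ofReal {z ξ : ℂ} {K P Q : ℝ} (hz : 0 < z.im)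
    (hξ : (ξ ^ 2).im < 0) (hP : 0 ≤ P) (hQ : 0 ≤ Q) (h : z * (K - ξ ^ 2 * P) = Q) : P = 0 := by
  have hz0 : z ≠ 0 := fun h0 => by simp [h0] at hz
  have h' : (K - ξ ^ 2 * P : ℂ) = Q / z := by rw [eq_div_iff hz0, mul_comm, h]
  have him := congrArg im h'
  simp only [sub_im, ofReal_im, mul_im, mul_zero, ofReal_re, zero_add, zero_sub, div_im,
    zero_mul, zero_div, neg_inj] at him
  have : 0 < normSq z := normSq_pos.mpr hz0
  have : Q * z.im / normSq z ≥ 0 := by positivity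
  nlinarith

theorem stmt_7_general (k1 k2 M2 σ2 : ℝ) (hM2 : 0 < M2) (hσ2 : 0 < σ2)
    (μ₁ μ₂ : ℂ → ℂ)
    (hμ₁ : ∀ ξ : ℂ, IsPrincipalSqrt ((k1 : ℂ) ^ 2 - ξ ^ 2) (μ₁ ξ))
    (hμ₂ : ∀ ξ : ℂ, IsPrincipalSqrt ((k2 : ℂ) ^ 2 - ξ ^ 2) (μ₂ ξ))
    (ξ : ℂ) (hξ : ξ.re * ξ.im < 0)
    (c₁ c₂ d₁ d₂ : ℂ)
    (h1 : c₁ * Complex.exp (Complex.I * μ₁ ξ * ((M2 : ℂ) + Complex.I * (σ2 : ℂ))) +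
          c₂ * Complex.exp (-(Complex.I * μ₁ ξ * ((M2 : ℂ) + Complex.I * (σ2 : ℂ)))) = 0)
    (h2 : d₁ * Complex.exp (Complex.I * μ₂ ξ * ((M2 : ℂ) + Complex.I * (σ2 : ℂ))) +
          d₂ * Complex.exp (-(Complex.I * μ₂ ξ * ((M2 : ℂ) + Complex.I * (σ2 : ℂ)))) = 0)
    (h3 : c₁ + c₂ = d₁ + d₂)
    (h4 : μ₁ ξ * (c₁ - c₂) = μ₂ ξ * (d₂ - d₁)) :
    c₁ = 0 ∧ c₂ = 0 ∧ d₁ = 0 ∧ d₂ = 0 := by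
  set M : ℂ := M2 + I * σ2
  have hMre : 0 < M.re := by simpa [M] using hM2
  have hMim : 0 < M.im := by simpa [M] using hσ2
  have hξ2 : (ξ ^ 2).im < 0 := by rw [sq, mul_im]; linarith
  have hk : ∀ k : ℝ, 0 < ((k : ℂ) ^ 2 - ξ ^ 2).im := fun k => by
    simpa [← ofReal_pow] using hξ2
  obtain ⟨hμ₁re, hμ₁im⟩ := (hμ₁ ξ).re_pos_and_im_pos (hk k1)
  obtain ⟨hμ₂re, hμ₂im⟩ := (hμ₂ ξ).re_pos_and_im_pos (hk k2)
  obtain ⟨P₁, Q₁, hP₁, hQ₁, hc, hPQ₁⟩ := exists_energy_identity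
    (im_mul_pos hμ₁re hμ₁im hMre hMim) (by simpa only [mul_assoc] using h1)
  obtain ⟨P₂, Q₂, hP₂, hQ₂, hd, hPQ₂⟩ := exists_energy_identity
    (im_mul_pos hμ₂re hμ₂im hMre hMim) (by simpa only [mul_assoc] using h2)
  have hP : P₁ + P₂ = 0 := by
    refine eq_zero_of_mul_sub_sq_mul_eq_ofReal (z := M ^ 2) (K := P₁ * k1 ^ 2 + P₂ * k2 ^ 2)
      (by rw [sq]; exact im_mul_pos hMre hMim hMre hMim) hξ2 (add_nonneg hP₁ hP₂)
      (add_nonneg hQ₁ hQ₂) ?_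
    push_cast
    linear_combination -hPQ₁ - hPQ₂ - P₁ * M ^ 2 * (hμ₁ ξ).1 - P₂ * M ^ 2 * (hμ₂ ξ).1
      + I * M * conj (c₁ + c₂) * h4 - I * μ₂ ξ * M * (d₁ - d₂) * congrArg conj h3
  obtain ⟨hc₁, hc₂⟩ := hc (by linarith)
  obtain ⟨hd₁, hd₂⟩ := hd (by linarith)
  exact ⟨hc₁, hc₂, hd₁, hd₂⟩

/-- Let `0 < k1 < k2`, `M2 > 0`, `σ̄2 > 0`, and let `ξ ∈ ℂ` with
`Re ξ · Im ξ < 0`. If `c₁, c₂, d₁, d₂ ∈ ℂ` satisfy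
`c₁ e^{i μ₁ M̃2} + c₂ e^{−i μ₁ M̃2} = 0`, `d₁ e^{i μ₂ M̃2} + d₂ e^{−i μ₂ M̃2} = 0`,
`c₁ + c₂ = d₁ + d₂` and `μ₁ (c₁ − c₂) = μ₂ (d₂ − d₁)`, then `c₁ = c₂ = d₁ = d₂ = 0`. -/
theorem stmt_7 (k1 k2 M2 σ2 : ℝ) (hk1 : 0 < k1) (hk12 : k1 < k2) (hM2 : 0 < M2) (hσ2 : 0 < σ2)
    (μ₁ μ₂ : ℂ → ℂ)
    (hμ₁ : ∀ ξ : ℂ, IsPrincipalSqrt ((k1 : ℂ) ^ 2 - ξ ^ 2) (μ₁ ξ))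
    (hμ₂ : ∀ ξ : ℂ, IsPrincipalSqrt ((k2 : ℂ) ^ 2 - ξ ^ 2) (μ₂ ξ))
    (ξ : ℂ) (hξ : ξ.re * ξ.im < 0)
    (c₁ c₂ d₁ d₂ : ℂ)
    (h1 : c₁ * Complex.exp (Complex.I * μ₁ ξ * ((M2 : ℂ) + Complex.I * (σ2 : ℂ))) +
          c₂ * Complex.exp (-(Complex.I * μ₁ ξ * ((M2 : ℂ) + Complex.I * (σ2 : ℂ)))) = 0)
    (h2 : d₁ * Complex.exp (Complex.I * μ₂ ξ * ((M2 : ℂ) + Complex.I * (σ2 : ℂ))) +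
          d₂ * Complex.exp (-(Complex.I * μ₂ ξ * ((M2 : ℂ) + Complex.I * (σ2 : ℂ)))) = 0)
    (h3 : c₁ + c₂ = d₁ + d₂)
    (h4 : μ₁ ξ * (c₁ - c₂) = μ₂ ξ * (d₂ - d₁)) :
    c₁ = 0 ∧ c₂ = 0 ∧ d₁ = 0 ∧ d₂ = 0 :=
  stmt_7_general k1 k2 M2 σ2 hM2 hσ2 μ₁ μ₂ hμ₁ hμ₂ ξ hξ c₁ c₂ d₁ d₂ h1 h2 h3 h4
end

section
/- Let 0 < k1 < k2, M2 > 0 and σ̄2 > 0. There exist a constant δ ∈ (0,1) and a constant C > 0 such that for every ξ ∈ ℂ with 0 ≤ Re ξ ≤ δ·k1 and 0 ≤ Im ξ ≤ δ·k1, one has A(ξ) ≠ 0 and |μ₁(ξ) + μ₂(ξ)| ≤ C·|A(ξ)|. -/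
open Complex ComplexConjugate

namespace IsPrincipalSqrt

variable {z w : ℂ}

lemma re_nonneg (h : IsPrincipalSqrt z w) : 0 ≤ w.re := by
  rcases h.2 with h | h
  · exact h.le
  · exact h.1.ge

lemma re_sq_sub_im_sq (h : IsPrincipalSqrt z w) : w.re ^ 2 - w.im ^ 2 = z.re := by
  simpa [pow_two, mul_re] using congrArg re h.1

lemma two_mul_re_mul_im (h : IsPrincipalSqrt z w) : 2 * w.re * w.im = z.im := by
  have := congrArg im h.1
  simp only [pow_two, mul_im] at this
  linarith

lemma sq_norm (h : IsPrincipalSqrt z w) : ‖w‖ ^ 2 = ‖z‖ := by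
  rw [← h.1, norm_pow]

lemma half_le_re_of_sub_sq {k k₁ : ℝ} {ξ : ℂ} (h : IsPrincipalSqrt (k ^ 2 - ξ ^ 2) w)
    (hk : k₁ ≤ k) (hξ : |ξ.re| ≤ k₁ / 2) : k₁ / 2 ≤ w.re := by
  have hre := h.re_sq_sub_im_sq
  simp only [sub_re, pow_two, mul_re, ofReal_re, ofReal_im] at hre
  have hξ2 : ξ.re * ξ.re ≤ (k₁ / 2) ^ 2 := by
    rw [← abs_mul_abs_self, pow_two]
    exact mul_self_le_mul_self (abs_nonneg _) hξ
  nlinarith [h.re_nonneg]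

lemma abs_im_le_of_sub_sq {k k₁ δ : ℝ} {ξ : ℂ} (h : IsPrincipalSqrt (k ^ 2 - ξ ^ 2) w)
    (hk₁ : 0 < k₁) (hw : k₁ / 2 ≤ w.re) (hre : |ξ.re| ≤ δ * k₁) (him : |ξ.im| ≤ δ * k₁) :
    |w.im| ≤ 2 * δ ^ 2 * k₁ := by
  have hprod : w.re * |w.im| = |ξ.re| * |ξ.im| := by
    have h2 := h.two_mul_re_mul_im
    simp only [sub_im, pow_two, mul_im, ofReal_re, ofReal_im] at h2
    rw [← abs_of_nonneg h.re_nonneg, ← abs_mul, ← abs_mul, ← abs_neg (ξ.re * ξ.im)]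
    exact congrArg abs (by linarith)
  have hbound : w.re * |w.im| ≤ (δ * k₁) ^ 2 := by
    rw [hprod, pow_two]
    exact mul_le_mul hre him (abs_nonneg _) ((abs_nonneg _).trans hre)
  nlinarith [abs_nonneg w.im]

lemma norm_le_of_sub_sq {k : ℝ} {ξ : ℂ} (h : IsPrincipalSqrt (k ^ 2 - ξ ^ 2) w)
    (hξ : ‖ξ‖ ≤ k) : ‖w‖ ≤ 2 * k := by
  have hz : ‖(k : ℂ) ^ 2 - ξ ^ 2‖ ≤ k ^ 2 + ‖ξ‖ ^ 2 := by
    have := norm_sub_le ((k : ℂ) ^ 2) (ξ ^ 2)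
    rwa [norm_pow, norm_pow, Complex.norm_real, Real.norm_eq_abs, sq_abs] at this
  have hw := h.sq_norm
  nlinarith [norm_nonneg w, norm_nonneg ξ]

lemma bounds_of_sub_sq {k k₁ δ : ℝ} {ξ : ℂ} (h : IsPrincipalSqrt (k ^ 2 - ξ ^ 2) w)
    (hk₁ : 0 < k₁) (hk : k₁ ≤ k) (hδ : δ ≤ 1 / 2) (hre : |ξ.re| ≤ δ * k₁)
    (him : |ξ.im| ≤ δ * k₁) :
    k₁ / 2 ≤ w.re ∧ |w.im| ≤ 2 * δ ^ 2 * k₁ ∧ ‖w‖ ≤ 2 * k := by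
  have hδk : δ * k₁ ≤ k₁ / 2 := by nlinarith
  have hw := h.half_le_re_of_sub_sq hk (hre.trans hδk)
  refine ⟨hw, h.abs_im_le_of_sub_sq hk₁ hw hre him, h.norm_le_of_sub_sq ?_⟩
  linarith [norm_le_abs_re_add_abs_im ξ]

end IsPrincipalSqrt

lemma norm_exp_two_I_mul (w : ℂ) (M σ : ℝ) :
    ‖exp (2 * I * w * ((M : ℂ) + I * (σ : ℂ)))‖ = Real.exp (-(2 * (σ * w.re + M * w.im))) := by
  rw [norm_exp]
  congr 1
  simp [mul_re, mul_im]
  ring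

lemma norm_exp_two_I_mul_le {M σ k₁ δ : ℝ} {w : ℂ} (hM : 0 ≤ M) (hσ : 0 ≤ σ) (hk₁ : 0 ≤ k₁)
    (hδ : δ ^ 2 * (8 * M) ≤ σ) (hre : k₁ / 2 ≤ w.re) (him : |w.im| ≤ 2 * δ ^ 2 * k₁) :
    ‖exp (2 * I * w * ((M : ℂ) + I * (σ : ℂ)))‖ ≤ Real.exp (-(k₁ * σ / 2)) := by
  rw [norm_exp_two_I_mul, Real.exp_le_exp]
  nlinarith [mul_le_mul_of_nonneg_left hre hσ, mul_le_mul_of_nonneg_right hδ hk₁,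
    mul_le_mul_of_nonneg_left ((neg_le_abs w.im).trans him) hM]

lemma re_mul_one_sub_mul_one_add_conj (w e : ℂ) :
    (w * ((1 - e) * (1 + conj e))).re = w.re * (1 - ‖e‖ ^ 2) + 2 * w.im * e.im := by
  rw [Complex.sq_norm, normSq_apply]
  simp only [mul_re, mul_im, sub_re, sub_im, add_re, add_im, one_re, one_im, conj_re, conj_im]
  ring

lemma le_re_mul_one_sub_mul_one_add_conj {w e : ℂ} {x y r : ℝ} (hx : x ≤ w.re) (hy : |w.im| ≤ y)
    (he : ‖e‖ ≤ r) (hr : r ≤ 1) (hx₀ : 0 ≤ x) :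
    x * (1 - r ^ 2) - 2 * y ≤ (w * ((1 - e) * (1 + conj e))).re := by
  rw [re_mul_one_sub_mul_one_add_conj]
  have he₀ := norm_nonneg e
  have hime : |w.im * e.im| ≤ y := by
    rw [abs_mul]
    nlinarith [abs_nonneg w.im, abs_im_le_norm e, abs_nonneg e.im]
  have hsq : ‖e‖ ^ 2 ≤ r ^ 2 := pow_le_pow_left₀ he₀ he 2
  have hx' := mul_le_mul_of_nonneg_right hx (by nlinarith : 0 ≤ 1 - ‖e‖ ^ 2)
  nlinarith [neg_abs_le (w.im * e.im)]

lemma conj_one_add_mul_conj_one_add_mul (e₁ e₂ w₁ w₂ : ℂ) :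
    conj (1 + e₁) * conj (1 + e₂) * ((1 - e₁ * e₂) * (w₁ + w₂) + (e₁ - e₂) * (w₁ - w₂))
      = (normSq (1 + e₁) : ℂ) * (w₁ * ((1 - e₂) * (1 + conj e₂)))
        + (normSq (1 + e₂) : ℂ) * (w₂ * ((1 - e₁) * (1 + conj e₁))) := by
  rw [← mul_conj, ← mul_conj]
  simp only [map_add, map_one]
  ring

lemma sq_one_sub_le_normSq_one_add {e : ℂ} {r : ℝ} (he : ‖e‖ ≤ r) (hr : r ≤ 1) :
    (1 - r) ^ 2 ≤ normSq (1 + e) := by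
  rw [← Complex.sq_norm]
  have : 1 - ‖e‖ ≤ ‖1 + e‖ := by
    simpa using norm_sub_norm_le (1 : ℂ) (-e)
  exact pow_le_pow_left₀ (by linarith) (by linarith) 2

lemma le_norm_of_le_re {e₁ e₂ w₁ w₂ : ℂ} {r c : ℝ} (he₁ : ‖e₁‖ ≤ r) (he₂ : ‖e₂‖ ≤ r) (hr : r ≤ 1)
    (hc : 0 ≤ c) (h₁ : c ≤ (w₁ * ((1 - e₂) * (1 + conj e₂))).re)
    (h₂ : c ≤ (w₂ * ((1 - e₁) * (1 + conj e₁))).re) :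
    (1 - r) ^ 2 * c / 2 ≤ ‖(1 - e₁ * e₂) * (w₁ + w₂) + (e₁ - e₂) * (w₁ - w₂)‖ := by
  set a := (1 - e₁ * e₂) * (w₁ + w₂) + (e₁ - e₂) * (w₁ - w₂)
  have hre : 2 * ((1 - r) ^ 2 * c) ≤ (conj (1 + e₁) * conj (1 + e₂) * a).re := by
    rw [conj_one_add_mul_conj_one_add_mul, add_re, re_ofReal_mul, re_ofReal_mul]
    have := sq_nonneg (1 - r)
    nlinarith [sq_one_sub_le_normSq_one_add he₁ hr, sq_one_sub_le_normSq_one_add he₂ hr]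
  have hbound (e : ℂ) (he : ‖e‖ ≤ r) : ‖1 + e‖ ≤ 2 := by
    linarith [norm_add_le 1 e, norm_one (α := ℂ)]
  have hnorm : (conj (1 + e₁) * conj (1 + e₂) * a).re ≤ 4 * ‖a‖ := by
    refine (re_le_norm _).trans ?_
    rw [norm_mul, norm_mul, norm_conj, norm_conj]
    have := mul_le_mul (hbound e₁ he₁) (hbound e₂ he₂) (norm_nonneg _) zero_le_two
    nlinarith [norm_nonneg a, norm_nonneg (1 + e₁)]
  linarith

lemma exists_pos_le_half_sq_le {a b : ℝ} (ha : 0 < a) (hb : 0 < b) :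
    ∃ δ : ℝ, 0 < δ ∧ δ ≤ 1 / 2 ∧ δ ^ 2 ≤ a ∧ δ ^ 2 ≤ b := by
  set δ := min (1 / 2) (min a b)
  have hδ : 0 < δ := lt_min one_half_pos (lt_min ha hb)
  have hδ1 : δ ≤ 1 / 2 := min_le_left _ _
  have hsq : δ ^ 2 ≤ min a b := by nlinarith [min_le_right (1 / 2 : ℝ) (min a b)]
  exact ⟨δ, hδ, hδ1, hsq.trans (min_le_left _ _), hsq.trans (min_le_right _ _)⟩

/-- Let `0 < k1 < k2`, `M2 > 0`, `σ̄2 > 0`. There exist `δ ∈ (0,1)` and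
`C > 0` such that for every `ξ` with `0 ≤ Re ξ ≤ δ k1` and `0 ≤ Im ξ ≤ δ k1` one has
`A(ξ) ≠ 0` and `|μ₁(ξ) + μ₂(ξ)| ≤ C |A(ξ)|`. -/
theorem stmt_11 (k1 k2 M2 σ2 : ℝ) (hk1 : 0 < k1) (hk12 : k1 < k2) (hM2 : 0 < M2) (hσ2 : 0 < σ2)
    (μ₁ μ₂ ε₁ ε₂ A : ℂ → ℂ)
    (hμ₁ : ∀ ξ : ℂ, IsPrincipalSqrt ((k1 : ℂ) ^ 2 - ξ ^ 2) (μ₁ ξ))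
    (hμ₂ : ∀ ξ : ℂ, IsPrincipalSqrt ((k2 : ℂ) ^ 2 - ξ ^ 2) (μ₂ ξ))
    (hε₁ : ∀ ξ : ℂ, ε₁ ξ = Complex.exp (2 * Complex.I * μ₁ ξ * ((M2 : ℂ) + Complex.I * (σ2 : ℂ))))
    (hε₂ : ∀ ξ : ℂ, ε₂ ξ = Complex.exp (2 * Complex.I * μ₂ ξ * ((M2 : ℂ) + Complex.I * (σ2 : ℂ))))
    (hA : ∀ ξ : ℂ, A ξ =
      (1 - ε₁ ξ * ε₂ ξ) * (μ₁ ξ + μ₂ ξ) + (ε₁ ξ - ε₂ ξ) * (μ₁ ξ - μ₂ ξ)) :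
    ∃ δ : ℝ, δ ∈ Set.Ioo (0 : ℝ) 1 ∧ ∃ C : ℝ, 0 < C ∧
      ∀ ξ : ℂ, 0 ≤ ξ.re → ξ.re ≤ δ * k1 → 0 ≤ ξ.im → ξ.im ≤ δ * k1 →
        A ξ ≠ 0 ∧ ‖μ₁ ξ + μ₂ ξ‖ ≤ C * ‖A ξ‖ := by
  set r := Real.exp (-(k1 * σ2 / 2))
  have hr₀ : 0 < r := Real.exp_pos _
  have hr : r < 1 := Real.exp_lt_one_iff.mpr (by nlinarith)
  have hr₁ : 0 < 1 - r := by linarith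
  have hr₂ : 0 < 1 - r ^ 2 := by nlinarith
  obtain ⟨δ, hδ₀, hδ, hδσ, hδr⟩ :=
    exists_pos_le_half_sq_le (a := σ2 / (8 * M2)) (b := (1 - r ^ 2) / 16) (by positivity)
      (by linarith)
  rw [le_div_iff₀ (by positivity)] at hδσ
  set m := (1 - r) ^ 2 * (k1 / 4 * (1 - r ^ 2)) / 2
  have hm : 0 < m := div_pos (mul_pos (pow_pos hr₁ 2) (mul_pos (by positivity) hr₂)) two_pos
  have hC : 0 < 2 * (k1 + k2) / m := div_pos (by linarith) hm
  refine ⟨δ, ⟨hδ₀, by linarith⟩, 2 * (k1 + k2) / m, hC, fun ξ ha₀ ha hb₀ hb => ?_⟩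
  have hre : |ξ.re| ≤ δ * k1 := abs_le.mpr ⟨by linarith, ha⟩
  have him : |ξ.im| ≤ δ * k1 := abs_le.mpr ⟨by linarith, hb⟩
  obtain ⟨hre₁, him₁, hnorm₁⟩ := (hμ₁ ξ).bounds_of_sub_sq hk1 le_rfl hδ hre him
  obtain ⟨hre₂, him₂, hnorm₂⟩ := (hμ₂ ξ).bounds_of_sub_sq hk1 hk12.le hδ hre him
  have hc (w e : ℂ) (hre : k1 / 2 ≤ w.re) (him : |w.im| ≤ 2 * δ ^ 2 * k1) (he : ‖e‖ ≤ r) :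
      k1 / 4 * (1 - r ^ 2) ≤ (w * ((1 - e) * (1 + conj e))).re := by
    refine le_trans ?_ (le_re_mul_one_sub_mul_one_add_conj hre him he hr.le (by positivity))
    nlinarith [mul_le_mul_of_nonneg_left hδr hk1.le]
  have hAm : m ≤ ‖A ξ‖ := by
    have he₁ := (hε₁ ξ).symm ▸ norm_exp_two_I_mul_le hM2.le hσ2.le hk1.le hδσ hre₁ him₁
    have he₂ := (hε₂ ξ).symm ▸ norm_exp_two_I_mul_le hM2.le hσ2.le hk1.le hδσ hre₂ him₂
    rw [hA ξ]
    exact le_norm_of_le_re he₁ he₂ hr.le (by positivity)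
      (hc _ _ hre₁ him₁ he₂) (hc _ _ hre₂ him₂ he₁)
  refine ⟨norm_pos_iff.mp (hm.trans_le hAm), ?_⟩
  calc ‖μ₁ ξ + μ₂ ξ‖ ≤ 2 * (k1 + k2) := by linarith [norm_add_le (μ₁ ξ) (μ₂ ξ)]
    _ = 2 * (k1 + k2) / m * m := by field_simp
    _ ≤ 2 * (k1 + k2) / m * ‖A ξ‖ := mul_le_mul_of_nonneg_left hAm hC.le
end
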